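/- Let (X^ε, Ω, P^ε) be an irreducible, OM-reversible parametrized family of Markov chains on the configuration space Ω of n ≥ 1 particles on a finite connected graph, in which at most one particle jumps to an adjacent vertex at each time step (P(x,y) > 0 only if y = x or y = x^{i,j} with v_i ∼ v_j and x_i ≥ 1), such that φ(P(x,y)) ∈ {0,1} for all x, y with P(x,y) > 0, and such that the stationary distributions π^ε have entries with integer orders of magnitude satisfying φ(π(x)) = |s(x)| − 1 for every x ∈ Ω. Then the family is a generalized clustering process; that is: if |s(x)| = |s(y)| and P(x,y) > 0 then φ(P(x,y)) = φ(P(y,x)), and if |s(x)| = |s(y)| − 1 and P(x,y) > 0 then φ(P(x,y)) = 1 and φ(P(y,x)) = 0. -/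

import Mathlib

/-! Along every edge, `φ(π(x)) + φ(P(x,y)) = φ(π(y)) + φ(P(y,x))`. By OM-reversibility this says
that `φ(π) - ν` is constant. If it were not, let `S` be the set where it is minimal; irreducibility
gives an edge leaving `S`. Stationarity makes the probability flux across the cut `(S, Sᶜ)` the same
in both directions, so both fluxes have the same order of magnitude, namely the least order of a
term. But minimality of `φ(π) - ν` on `S` makes every backward term `π(y) P(y,x)` of strictly
higher order than the forward term `π(x) P(x,y)`. Given `φ(π(x)) = |s(x)| - 1` and
`φ(P) ∈ {0,1}`, the edge identity is exactly the clustering property. -/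

open Finset

/-- `f` is `Θ(ε^k)` as `ε → 0⁺`: there are positive constants `M₁, M₂, ε̄` with
`M₁ ε^k ≤ f ε ≤ M₂ ε^k` for all `0 < ε < ε̄`. -/
def IsTheta (f : ℝ → ℝ) (k : ℤ) : Prop :=
  ∃ M₁ M₂ εbar : ℝ, 0 < M₁ ∧ 0 < M₂ ∧ 0 < εbar ∧
    ∀ ε : ℝ, 0 < ε → ε < εbar → M₁ * ε ^ k ≤ f ε ∧ f ε ≤ M₂ * ε ^ k

/-- `P(u,v) > 0` in the order-of-magnitude sense: `ε ↦ P^ε(u,v)` is `Θ(ε^k)`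
for some integer `k`. -/
def EPos {Ω : Type*} (P : ℝ → Ω → Ω → ℝ) (u v : Ω) : Prop :=
  ∃ k : ℤ, IsTheta (fun ε => P ε u v) k

/-- Configurations of `n` particles on the vertex set `V`. -/
abbrev Config (V : Type) [Fintype V] (n : ℕ) := {x : V → ℕ // ∑ v, x v = n}

noncomputable instance Config.fintype {V : Type} [Fintype V] [DecidableEq V] {n : ℕ} :
    Fintype (Config V n) :=
  Fintype.ofInjective
    (fun x : Config V n => fun v : V =>
      (⟨x.val v, Nat.lt_succ_of_le ((Finset.single_le_sum
        (f := x.val) (fun i _ => Nat.zero_le _) (Finset.mem_univ v)).trans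
        (le_of_eq x.2))⟩ : Fin (n + 1)))
    (fun a b h => Subtype.ext (funext fun v => congrArg Fin.val (congrFun h v)))

/-- The configuration `x^{i,j}` obtained from `x` by moving one particle from vertex `i`
to vertex `j` (with `x^{i,i} = x`). -/
def move {V : Type} [DecidableEq V] (x : V → ℕ) (i j : V) : V → ℕ :=
  if i = j then x else Function.update (Function.update x i (x i - 1)) j (x j + 1)

/-- The support of a configuration: the set of occupied vertices. -/
def supp {V : Type} [Fintype V] [DecidableEq V] (x : V → ℕ) : Finset V :=
  Finset.univ.filter fun v => x v ≠ 0

open Filter Topology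

theorem eventually_nhdsGT_zero_iff {p : ℝ → Prop} :
    (∀ᶠ ε in 𝓝[>] (0 : ℝ), p ε) ↔ ∃ εbar > (0 : ℝ), ∀ ε : ℝ, 0 < ε → ε < εbar → p ε := by
  change {ε | p ε} ∈ 𝓝[>] (0 : ℝ) ↔ _
  rw [mem_nhdsGT_iff_exists_Ioo_subset]
  exact exists_congr fun εbar =>
    and_congr_right' ⟨fun h ε h₀ h₁ => h ⟨h₀, h₁⟩, fun h ε hε => h ε hε.1 hε.2⟩

theorem isTheta_iff {f : ℝ → ℝ} {k : ℤ} :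
    IsTheta f k ↔ ∃ M₁ M₂ : ℝ, 0 < M₁ ∧ 0 < M₂ ∧
      ∀ᶠ ε in 𝓝[>] (0 : ℝ), M₁ * ε ^ k ≤ f ε ∧ f ε ≤ M₂ * ε ^ k := by
  simp only [eventually_nhdsGT_zero_iff, IsTheta, gt_iff_lt]
  exact exists₂_congr fun M₁ M₂ => by tauto

namespace IsTheta

variable {f g : ℝ → ℝ} {k l : ℤ}

theorem congr (hg : IsTheta g k) (hfg : f =ᶠ[𝓝[>] 0] g) : IsTheta f k := by
  obtain ⟨M₁, M₂, hM₁, hM₂, hg⟩ := isTheta_iff.1 hg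
  refine isTheta_iff.2 ⟨M₁, M₂, hM₁, hM₂, ?_⟩
  filter_upwards [hg, hfg] with ε hε hfgε
  rwa [hfgε]

theorem mul (hf : IsTheta f k) (hg : IsTheta g l) : IsTheta (fun ε => f ε * g ε) (k + l) := by
  obtain ⟨M₁, M₂, hM₁, hM₂, hf⟩ := isTheta_iff.1 hf
  obtain ⟨N₁, N₂, hN₁, hN₂, hg⟩ := isTheta_iff.1 hg
  refine isTheta_iff.2 ⟨M₁ * N₁, M₂ * N₂, by positivity, by positivity, ?_⟩
  filter_upwards [hf, hg, self_mem_nhdsWithin] with ε ⟨hf₁, hf₂⟩ ⟨hg₁, hg₂⟩ (hε : 0 < ε)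
  rw [zpow_add₀ hε.ne']
  constructor
  · calc M₁ * N₁ * (ε ^ k * ε ^ l) = (M₁ * ε ^ k) * (N₁ * ε ^ l) := by ring
      _ ≤ f ε * g ε := mul_le_mul hf₁ hg₁ (by positivity) (hf₁.trans' (by positivity))
  · calc f ε * g ε ≤ (M₂ * ε ^ k) * (N₂ * ε ^ l) :=
          mul_le_mul hf₂ hg₂ (hg₁.trans' (by positivity)) (by positivity)
      _ = M₂ * N₂ * (ε ^ k * ε ^ l) := by ring

theorem add (hf : IsTheta f k) (hg : IsTheta g l) :
    IsTheta (fun ε => f ε + g ε) (min k l) := by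
  obtain ⟨M₁, M₂, hM₁, hM₂, hf⟩ := isTheta_iff.1 hf
  obtain ⟨N₁, N₂, hN₁, hN₂, hg⟩ := isTheta_iff.1 hg
  refine isTheta_iff.2 ⟨min M₁ N₁, M₂ + N₂, by positivity, by positivity, ?_⟩
  filter_upwards [hf, hg, Ioo_mem_nhdsGT zero_lt_one] with ε ⟨hf₁, hf₂⟩ ⟨hg₁, hg₂⟩ ⟨hε₀, hε₁⟩
  have hk : ε ^ k ≤ ε ^ min k l := zpow_le_zpow_right_of_le_one₀ hε₀ hε₁.le (min_le_left k l)
  have hl : ε ^ l ≤ ε ^ min k l := zpow_le_zpow_right_of_le_one₀ hε₀ hε₁.le (min_le_right k l)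
  have hfpos : 0 < f ε := hf₁.trans_lt' (by positivity)
  have hgpos : 0 < g ε := hg₁.trans_lt' (by positivity)
  constructor
  · rcases le_total k l with hkl | hkl
    · rw [min_eq_left hkl]
      nlinarith [min_le_left M₁ N₁, zpow_pos hε₀ k]
    · rw [min_eq_right hkl]
      nlinarith [min_le_right M₁ N₁, zpow_pos hε₀ l]
  · nlinarith

theorem sum {α : Type*} {s : Finset α} (hs : s.Nonempty) {f : α → ℝ → ℝ} {k : α → ℤ}
    (hf : ∀ a ∈ s, IsTheta (f a) (k a)) :
    IsTheta (fun ε => ∑ a ∈ s, f a ε) (s.inf' hs k) := by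
  induction hs using Finset.Nonempty.cons_induction with
  | singleton a => simpa using hf a (Finset.mem_singleton_self a)
  | cons a s ha hs ih =>
    simp only [Finset.sum_cons, Finset.inf'_cons hs]
    exact (hf a (Finset.mem_cons_self a s)).add (ih fun b hb => hf b (Finset.mem_cons_of_mem hb))

theorem unique (hk : IsTheta f k) (hl : IsTheta f l) : k = l := by
  suffices ∀ {k l : ℤ}, IsTheta f k → IsTheta f l → ¬ k < l by
    exact le_antisymm (not_lt.1 (this hl hk)) (not_lt.1 (this hk hl))
  intro k l hk hl hkl
  obtain ⟨M₁, _, hM₁, -, hkbound⟩ := isTheta_iff.1 hk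
  obtain ⟨_, N₂, -, -, hlbound⟩ := isTheta_iff.1 hl
  -- `M₁ ≤ N₂ ε ^ (l - k)` near `0`, but the right side tends to `0`
  have hlim : Tendsto (fun ε : ℝ => N₂ * ε ^ (l - k)) (𝓝[>] 0) (𝓝 0) := by
    have h := ((continuousAt_zpow₀ (0 : ℝ) (l - k) (Or.inr (by omega))).tendsto).const_mul N₂
    rw [zero_zpow _ (by omega), mul_zero] at h
    exact tendsto_nhdsWithin_of_tendsto_nhds h
  obtain ⟨ε, ⟨hk₁, -⟩, ⟨-, hl₂⟩, hsmall, hε⟩ :=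
    (hkbound.and (hlbound.and ((hlim.eventually_lt_const hM₁).and self_mem_nhdsWithin))).exists
  have hε : (0 : ℝ) < ε := hε
  have : M₁ * ε ^ k ≤ N₂ * ε ^ (l - k) * ε ^ k := by
    rw [mul_assoc, ← zpow_add₀ hε.ne', sub_add_cancel]
    exact hk₁.trans hl₂
  nlinarith [zpow_pos hε k]

end IsTheta

theorem flux_out_eq_flux_in {Ω : Type*} [Fintype Ω] [DecidableEq Ω] (P : Ω → Ω → ℝ) (π : Ω → ℝ)
    (hrow : ∀ x, ∑ y, P x y = 1) (hstat : ∀ y, ∑ x, π x * P x y = π y) (S : Finset Ω) :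
    ∑ x ∈ S, ∑ y ∈ Sᶜ, π x * P x y = ∑ x ∈ S, ∑ y ∈ Sᶜ, π y * P y x := by
  have hmass : ∑ x ∈ S, ∑ y, π x * P x y = ∑ x ∈ S, ∑ y, π y * P y x := by
    simp only [← Finset.mul_sum, hrow, mul_one, hstat]
  simp only [← Finset.sum_add_sum_compl S, Finset.sum_add_distrib] at hmass
  linarith [Finset.sum_comm (s := S) (t := S) (f := fun x y => π x * P x y)]

theorem exists_mem_not_mem_of_chain {Ω : Type*} {R : Ω → Ω → Prop} {S : Set Ω} {c : ℕ → Ω}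
    {r : ℕ} (hc : ∀ i < r, R (c i) (c (i + 1))) (h₀ : c 0 ∈ S) (hr : c r ∉ S) :
    ∃ x ∈ S, ∃ y ∉ S, R x y := by
  induction r with
  | zero => exact absurd h₀ hr
  | succ r ih =>
    by_cases hcr : c r ∈ S
    · exact ⟨c r, hcr, c (r + 1), hr, hc r r.lt_succ_self⟩
    · exact ih (fun i hi => hc i (hi.trans r.lt_succ_self)) hcr

section OrderOfMagnitude

variable {Ω : Type*} [Fintype Ω] {P : ℝ → Ω → Ω → ℝ} {π : ℝ → Ω → ℝ}
  {φP : Ω → Ω → ℤ} {φπ : Ω → ℤ}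

theorem exists_crossing_edge_order_le
    (hrow : ∀ ε : ℝ, 0 < ε → ∀ x, ∑ y, P ε x y = 1)
    (hstat : ∀ ε : ℝ, 0 < ε → ∀ y, ∑ x, π ε x * P ε x y = π ε y)
    (hzero : ∀ x y, ¬ EPos P x y → ∃ εbar > (0 : ℝ), ∀ ε : ℝ, 0 < ε → ε < εbar → P ε x y = 0)
    (hsym : ∀ x y, EPos P x y ↔ EPos P y x)
    (hφP : ∀ x y, EPos P x y → IsTheta (fun ε => P ε x y) (φP x y))
    (hφπ : ∀ z, IsTheta (fun ε => π ε z) (φπ z))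
    {S : Finset Ω} (hcross : ∃ x ∈ S, ∃ y ∉ S, EPos P x y) :
    ∃ x ∈ S, ∃ y ∉ S, EPos P x y ∧ φπ y + φP y x ≤ φπ x + φP x y := by
  classical
  set E := (S ×ˢ Sᶜ).filter fun p => EPos P p.1 p.2
  have hmemE : ∀ p ∈ E, p.1 ∈ S ∧ p.2 ∉ S ∧ EPos P p.1 p.2 := by
    simp [E, and_assoc]
  have hE : E.Nonempty := by
    obtain ⟨x, hx, y, hy, hxy⟩ := hcross
    exact ⟨(x, y), by simp [E, hx, hy, hxy]⟩
  have hout : IsTheta (fun ε => ∑ p ∈ E, π ε p.1 * P ε p.1 p.2)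
      (E.inf' hE fun p => φπ p.1 + φP p.1 p.2) :=
    IsTheta.sum hE fun p hp => (hφπ p.1).mul (hφP _ _ (hmemE p hp).2.2)
  have hin : IsTheta (fun ε => ∑ p ∈ E, π ε p.2 * P ε p.2 p.1)
      (E.inf' hE fun p => φπ p.2 + φP p.2 p.1) :=
    IsTheta.sum hE fun p hp => (hφπ p.2).mul (hφP _ _ ((hsym _ _).1 (hmemE p hp).2.2))
  have hvanish : ∀ᶠ ε in 𝓝[>] (0 : ℝ), ∀ x y, ¬ EPos P x y → P ε x y = 0 := by
    simp only [eventually_all, eventually_nhdsGT_zero_iff]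
    exact hzero
  have hbalance : (fun ε => ∑ p ∈ E, π ε p.2 * P ε p.2 p.1) =ᶠ[𝓝[>] 0]
      fun ε => ∑ p ∈ E, π ε p.1 * P ε p.1 p.2 := by
    filter_upwards [hvanish, self_mem_nhdsWithin] with ε hε (hpos : 0 < ε)
    have hnz : ∀ x y, P ε x y ≠ 0 → EPos P x y := fun x y h => not_not.1 (mt (hε x y) h)
    rw [Finset.sum_filter_of_ne, Finset.sum_filter_of_ne, Finset.sum_product, Finset.sum_product]
    · exact (flux_out_eq_flux_in (P ε) (π ε) (hrow ε hpos) (hstat ε hpos) S).symm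
    · exact fun p _ h => hnz _ _ (right_ne_zero_of_mul h)
    · exact fun p _ h => (hsym _ _).2 (hnz _ _ (right_ne_zero_of_mul h))
  obtain ⟨p, hp, hpmin⟩ := E.exists_mem_eq_inf' hE fun p => φπ p.2 + φP p.2 p.1
  obtain ⟨hp₁, hp₂, hpE⟩ := hmemE p hp
  refine ⟨p.1, hp₁, p.2, hp₂, hpE, ?_⟩
  calc φπ p.2 + φP p.2 p.1 = E.inf' hE fun p => φπ p.1 + φP p.1 p.2 :=
        hpmin.symm.trans ((hout.congr hbalance).unique hin).symm
    _ ≤ φπ p.1 + φP p.1 p.2 := E.inf'_le _ hp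

theorem order_detailed_balance
    (hrow : ∀ ε : ℝ, 0 < ε → ∀ x, ∑ y, P ε x y = 1)
    (hstat : ∀ ε : ℝ, 0 < ε → ∀ y, ∑ x, π ε x * P ε x y = π ε y)
    (hzero : ∀ x y, ¬ EPos P x y → ∃ εbar > (0 : ℝ), ∀ ε : ℝ, 0 < ε → ε < εbar → P ε x y = 0)
    (hsym : ∀ x y, EPos P x y ↔ EPos P y x)
    (hφP : ∀ x y, EPos P x y → IsTheta (fun ε => P ε x y) (φP x y))
    (hφπ : ∀ z, IsTheta (fun ε => π ε z) (φπ z))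
    (hirr : ∀ u v : Ω, ∃ (r : ℕ) (c : ℕ → Ω), c 0 = u ∧ c r = v ∧ ∀ i < r, EPos P (c i) (c (i + 1)))
    {ν : Ω → ℤ} (hν : ∀ u v, EPos P u v → ν u + φP u v = ν v + φP v u)
    {x y : Ω} (hxy : EPos P x y) :
    φπ x + φP x y = φπ y + φP y x := by
  obtain ⟨u, -, hu⟩ := Finset.exists_min_image Finset.univ (fun z => φπ z - ν z) ⟨x, mem_univ x⟩
  have hconst : ∀ w, φπ w - ν w = φπ u - ν u := by
    by_contra! ⟨w, hw⟩
    set S := Finset.univ.filter fun z => φπ z - ν z = φπ u - ν u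
    obtain ⟨r, c, hc₀, hcr, hc⟩ := hirr u w
    obtain ⟨a, ha, b, hb, hab⟩ := exists_crossing_edge_order_le hrow hstat hzero hsym hφP hφπ
      (S := S) (exists_mem_not_mem_of_chain hc (by simp [S, hc₀]) (by simpa [S, hcr] using hw))
    simp only [S, mem_filter, mem_univ, true_and] at ha hb
    have := hu a (mem_univ a)
    have := hu b (mem_univ b)
    have := hν a b hab.1
    omega
  have := hconst x
  have := hconst y
  have := hν x y hxy
  omega

end OrderOfMagnitude

theorem converse_is_generalized_clustering_process_general
    {V : Type} [Fintype V] [DecidableEq V]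
    (n : ℕ)
    (P : ℝ → Config V n → Config V n → ℝ)
    (hstoch : ∀ ε : ℝ, 0 < ε →
      (∀ x y : Config V n, 0 ≤ P ε x y) ∧ ∀ x : Config V n, ∑ y, P ε x y = 1)
    (hzero : ∀ x y : Config V n, ¬ EPos P x y →
      ∃ εbar > (0 : ℝ), ∀ ε : ℝ, 0 < ε → ε < εbar → P ε x y = 0)
    (hsym : ∀ x y : Config V n, EPos P x y ↔ EPos P y x)
    (φP : Config V n → Config V n → ℤ)
    (hφP : ∀ x y : Config V n, EPos P x y → IsTheta (fun ε => P ε x y) (φP x y))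
    (h01 : ∀ x y : Config V n, EPos P x y → φP x y = 0 ∨ φP x y = 1)
    (hirr : ∀ u v : Config V n, ∃ (r : ℕ) (c : ℕ → Config V n),
      c 0 = u ∧ c r = v ∧ ∀ i < r, EPos P (c i) (c (i + 1)))
    (homrev : ∃ ν : Config V n → ℤ, ∀ u v : Config V n, EPos P u v →
      ν u + φP u v = ν v + φP v u)
    (π : ℝ → Config V n → ℝ)
    (hstat : ∀ ε : ℝ, 0 < ε → (∀ z : Config V n, 0 ≤ π ε z) ∧ (∑ z, π ε z) = 1 ∧
      ∀ y : Config V n, (∑ x, π ε x * P ε x y) = π ε y)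
    (φπ : Config V n → ℤ)
    (hφπ : ∀ z : Config V n, IsTheta (fun ε => π ε z) (φπ z))
    (hφπval : ∀ z : Config V n, φπ z = ((supp z.val).card : ℤ) - 1) :
    (∀ x y : Config V n, EPos P x y →
      (supp x.val).card = (supp y.val).card → φP x y = φP y x) ∧
    (∀ x y : Config V n, EPos P x y →
      (supp x.val).card + 1 = (supp y.val).card → φP x y = 1 ∧ φP y x = 0) := by
  obtain ⟨ν, hν⟩ := homrev
  have hbalance : ∀ x y, EPos P x y → φπ x + φP x y = φπ y + φP y x := fun x y hxy =>
    order_detailed_balance (fun ε hε => (hstoch ε hε).2) (fun ε hε => (hstat ε hε).2.2)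
      hzero hsym hφP hφπ hirr hν hxy
  refine ⟨fun x y hxy hcard => ?_, fun x y hxy hcard => ?_⟩
  · have := hbalance x y hxy
    rw [hφπval, hφπval, hcard] at this
    omega
  · have := hbalance x y hxy
    rw [hφπval, hφπval, ← hcard, Nat.cast_add, Nat.cast_one] at this
    rcases h01 x y hxy with h | h <;> rcases h01 y x ((hsym x y).1 hxy) with h' | h' <;> omega

/-- Converse: an irreducible, OM-reversible interacting particle system in which at most
one particle moves to an adjacent vertex at each step, with `φ(P(x,y)) ∈ {0,1}`, whose
stationary distributions have orders of magnitude `φ(π(x)) = |s(x)| − 1`, is a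
generalized clustering process. -/
theorem converse_is_generalized_clustering_process
    {V : Type} [Fintype V] [DecidableEq V]
    (G : SimpleGraph V) (hconn : G.Connected)
    (n : ℕ) (hn : 1 ≤ n)
    (P : ℝ → Config V n → Config V n → ℝ)
    (hstoch : ∀ ε : ℝ, 0 < ε →
      (∀ x y : Config V n, 0 ≤ P ε x y) ∧ ∀ x : Config V n, ∑ y, P ε x y = 1)
    (hmoves : ∀ x y : Config V n, EPos P x y →
      y = x ∨ ∃ i j : V, G.Adj i j ∧ 1 ≤ x.val i ∧ y.val = move x.val i j)
    (hzero : ∀ x y : Config V n, ¬ EPos P x y →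
      ∃ εbar > (0 : ℝ), ∀ ε : ℝ, 0 < ε → ε < εbar → P ε x y = 0)
    (hsym : ∀ x y : Config V n, EPos P x y ↔ EPos P y x)
    (φP : Config V n → Config V n → ℤ)
    (hφP : ∀ x y : Config V n, EPos P x y → IsTheta (fun ε => P ε x y) (φP x y))
    (h01 : ∀ x y : Config V n, EPos P x y → φP x y = 0 ∨ φP x y = 1)
    (hirr : ∀ u v : Config V n, ∃ (r : ℕ) (c : ℕ → Config V n),
      c 0 = u ∧ c r = v ∧ ∀ i < r, EPos P (c i) (c (i + 1)))
    (homrev : ∃ ν : Config V n → ℤ, ∀ u v : Config V n, EPos P u v →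
      ν u + φP u v = ν v + φP v u)
    (π : ℝ → Config V n → ℝ)
    (hstat : ∀ ε : ℝ, 0 < ε → (∀ z : Config V n, 0 ≤ π ε z) ∧ (∑ z, π ε z) = 1 ∧
      ∀ y : Config V n, (∑ x, π ε x * P ε x y) = π ε y)
    (φπ : Config V n → ℤ)
    (hφπ : ∀ z : Config V n, IsTheta (fun ε => π ε z) (φπ z))
    (hφπval : ∀ z : Config V n, φπ z = ((supp z.val).card : ℤ) - 1) :
    (∀ x y : Config V n, EPos P x y →
      (supp x.val).card = (supp y.val).card → φP x y = φP y x) ∧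
    (∀ x y : Config V n, EPos P x y →
      (supp x.val).card + 1 = (supp y.val).card → φP x y = 1 ∧ φP y x = 0) :=
  converse_is_generalized_clustering_process_general n P hstoch hzero hsym φP hφP h01 hirr homrev π
    hstat φπ hφπ hφπval
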